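/- Let v₀, v₁, v₂, … be i.i.d. positive real-valued random variables with E[1/v₀] < ∞, and let u₁, u₂, … be random variables with values in [0,1]. Fix n ≥ 1, define the backward Metropolis runs A₀, …, A_n from v₀, …, v_n and u₁, …, u_n, and set Ŷ_i := 1/A_{n−i} for 0 ≤ i ≤ n. Then E[|Ŷ_0| + Σ_{i=1}^n |Ŷ_i − Ŷ_{i−1}|] ≤ 2·E[1/v₀]; in particular, the backward coupled estimator satisfies the integrability condition for Russian roulette truncation uniformly in n. -/

import Mathlib

open MeasureTheory

/-- The Metropolis weight update: from current weight `w`, proposed weight `w'`, and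
uniform draw `u`, accept the proposal iff `u ≤ min 1 (w'/w)`. -/
noncomputable def metroF (w w' u : ℝ) : ℝ := if u ≤ min 1 (w' / w) then w' else w

/-- The chain started at index `k`, after `m` steps: `B k = v k`,
`B (k+m+1) = f (B (k+m)) (v (k+m+1)) (u (k+m+1))`. -/
noncomputable def backB (v u : ℕ → ℝ) (k : ℕ) : ℕ → ℝ
  | 0 => v k
  | m + 1 => metroF (backB v u k m) (v (k + m + 1)) (u (k + m + 1))

/-- The backward Metropolis run started at index `k ≤ n`: start at `v k` and apply the
Metropolis updates with proposals `v (k+1), …, v n` and draws `u (k+1), …, u n`; runs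
started at different indices share the same pair `(v j, u j)` at each step `j`. -/
noncomputable def backA (v u : ℕ → ℝ) (n k : ℕ) : ℝ := backB v u k (n - k)

/-! Runs started earlier dominate runs started later: the Metropolis update is monotone in the
current weight for a shared proposal and draw, and never falls below the proposal. Hence
`A_0 ≥ A_1 ≥ ⋯ ≥ A_n = v_n`, so `Ŷ` is a nonnegative nonincreasing sequence, its variation
telescopes to `Ŷ_0 - Ŷ_n`, and the integrand is at most `2 Ŷ_0 = 2 / v_n`, which has the
same law as `2 / v_0`. -/

lemma metroF_pos {w w' u : ℝ} (hw : 0 < w) (hw' : 0 < w') : 0 < metroF w w' u := by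
  unfold metroF; split <;> assumption

lemma le_metroF {w w' u : ℝ} (hw : 0 < w) (hu : u ≤ 1) : w' ≤ metroF w w' u := by
  unfold metroF
  split_ifs with h
  · exact le_rfl
  · have hlt : w' / w < 1 :=
      (min_lt_iff.1 ((not_le.1 h).trans_le hu)).resolve_left (lt_irrefl 1)
    exact ((div_lt_one hw).1 hlt).le

lemma metroF_mono {b b' p u : ℝ} (hb' : 0 < b') (hle : b' ≤ b) (hp : 0 < p) (hu : u ≤ 1) :
    metroF b' p u ≤ metroF b p u := by
  by_cases h : u ≤ min 1 (p / b')
  · rw [metroF, if_pos h]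
    exact le_metroF (hb'.trans_le hle) hu
  · have h' : ¬ u ≤ min 1 (p / b) := fun h' =>
      h (h'.trans (min_le_min_left 1 (div_le_div_of_nonneg_left hp.le hb' hle)))
    rw [metroF, metroF, if_neg h, if_neg h']
    exact hle

section BackwardRuns

variable {v u : ℕ → ℝ}

lemma backB_pos (hv : ∀ j, 0 < v j) (k m : ℕ) : 0 < backB v u k m := by
  induction m with
  | zero => exact hv k
  | succ m ih => exact metroF_pos ih (hv _)

lemma backB_succ_le (hv : ∀ j, 0 < v j) (hu : ∀ j, u j ≤ 1) (k m : ℕ) :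
    backB v u (k + 1) m ≤ backB v u k (m + 1) := by
  induction m with
  | zero => exact le_metroF (hv k) (hu _)
  | succ m ih =>
    have hidx : k + 1 + m + 1 = k + (m + 1) + 1 := by omega
    simp only [backB, hidx]
    exact metroF_mono (backB_pos hv _ _) ih (hv _) (hu _)

lemma backA_pos (hv : ∀ j, 0 < v j) (n k : ℕ) : 0 < backA v u n k :=
  backB_pos hv k _

lemma backA_self (n : ℕ) : backA v u n n = v n := by
  simp [backA, backB]

lemma backA_succ_le (hv : ∀ j, 0 < v j) (hu : ∀ j, u j ≤ 1) {n k : ℕ} (hk : k < n) :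
    backA v u n (k + 1) ≤ backA v u n k := by
  have h : n - k = n - (k + 1) + 1 := by omega
  rw [backA, backA, h]
  exact backB_succ_le hv hu k _

lemma antitone_one_div_backA_sub (hv : ∀ j, 0 < v j) (hu : ∀ j, u j ≤ 1) (n : ℕ) :
    Antitone fun i => 1 / backA v u n (n - i) := by
  refine antitone_nat_of_succ_le fun i => ?_
  rcases lt_or_ge i n with hi | hi
  · have h : n - i = n - (i + 1) + 1 := by omega
    rw [h]
    exact one_div_le_one_div_of_le (backA_pos hv _ _) (backA_succ_le hv hu (by omega))
  · rw [Nat.sub_eq_zero_of_le hi, Nat.sub_eq_zero_of_le (by omega)]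

end BackwardRuns

lemma sum_Icc_sub_pred_eq (Y : ℕ → ℝ) (n : ℕ) :
    ∑ i ∈ Finset.Icc 1 n, (Y (i - 1) - Y i) = Y 0 - Y n := by
  induction n with
  | zero => simp
  | succ n ih =>
    rw [Finset.sum_Icc_succ_top (by omega), ih, Nat.add_sub_cancel]
    ring

lemma abs_add_sum_abs_sub_le_of_antitone {Y : ℕ → ℝ} (hY : Antitone Y) {n : ℕ}
    (hYn : 0 ≤ Y n) : |Y 0| + ∑ i ∈ Finset.Icc 1 n, |Y i - Y (i - 1)| ≤ 2 * Y 0 := by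
  have hvar : ∑ i ∈ Finset.Icc 1 n, |Y i - Y (i - 1)| = Y 0 - Y n := by
    rw [← sum_Icc_sub_pred_eq]
    refine Finset.sum_congr rfl fun i _ => ?_
    rw [abs_sub_comm, abs_of_nonneg (sub_nonneg.2 (hY (Nat.sub_le i 1)))]
  have hY0 : Y n ≤ Y 0 := hY (Nat.zero_le n)
  rw [hvar, abs_of_nonneg (hYn.trans hY0)]
  linarith

lemma backA_variation_le (hv : ∀ j, 0 < v j) (hu : ∀ j, u j ≤ 1) (n : ℕ) :
    |1 / backA v u n (n - 0)| +
      ∑ i ∈ Finset.Icc 1 n, |1 / backA v u n (n - i) - 1 / backA v u n (n - (i - 1))|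
      ≤ 2 * (1 / v n) := by
  have h := abs_add_sum_abs_sub_le_of_antitone (antitone_one_div_backA_sub hv hu n)
    (n := n) (one_div_pos.2 (backA_pos hv _ _)).le
  rwa [Nat.sub_zero, backA_self] at h ⊢

theorem bce_integrability_bound_general
    {Ω : Type*} [MeasurableSpace Ω] (μ : Measure Ω)
    (v u : ℕ → Ω → ℝ)
    (hvpos : ∀ k ω, 0 < v k ω) (hu : ∀ k ω, u k ω ∈ Set.Icc (0 : ℝ) 1)
    (hident : ∀ k, ProbabilityTheory.IdentDistrib (v k) (v 0) μ μ)
    (hint : Integrable (fun ω => 1 / v 0 ω) μ)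
    (n : ℕ) :
    ∫ ω, (|1 / backA (fun j => v j ω) (fun j => u j ω) n (n - 0)| +
      ∑ i ∈ Finset.Icc 1 n,
        |1 / backA (fun j => v j ω) (fun j => u j ω) n (n - i)
          - 1 / backA (fun j => v j ω) (fun j => u j ω) n (n - (i - 1))|) ∂μ
      ≤ 2 * ∫ ω, 1 / v 0 ω ∂μ := by
  have hid : ProbabilityTheory.IdentDistrib (fun ω => 1 / v n ω) (fun ω => 1 / v 0 ω) μ μ :=
    (hident n).comp (measurable_const.div measurable_id)
  calc _ ≤ ∫ ω, 2 * (1 / v n ω) ∂μ :=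
        integral_mono_of_nonneg
          (Filter.Eventually.of_forall fun ω =>
            add_nonneg (abs_nonneg _) (Finset.sum_nonneg fun i _ => abs_nonneg _))
          ((hid.integrable_iff.2 hint).const_mul 2)
          (Filter.Eventually.of_forall fun ω =>
            backA_variation_le (fun j => hvpos j ω) (fun j => (hu j ω).2) n)
    _ = 2 * ∫ ω, 1 / v 0 ω ∂μ := by rw [integral_const_mul, hid.integral_eq]

/-- **The backward coupled estimator satisfies the roulette integrability condition,
uniformly in `n`.** With i.i.d. positive weights `v 0, v 1, …` satisfying
`E[1/v 0] < ∞`, arbitrary `[0,1]`-valued `u`'s, and `Ŷ i = 1 / A (n - i)`,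
`E[|Ŷ 0| + ∑_{i=1}^{n} |Ŷ i - Ŷ (i-1)|] ≤ 2 E[1 / v 0]`. -/
theorem bce_integrability_bound
    {Ω : Type*} [MeasurableSpace Ω] (μ : Measure Ω) [IsProbabilityMeasure μ]
    (v u : ℕ → Ω → ℝ)
    (hvmeas : ∀ k, Measurable (v k)) (humeas : ∀ k, Measurable (u k))
    (hvpos : ∀ k ω, 0 < v k ω) (hu : ∀ k ω, u k ω ∈ Set.Icc (0 : ℝ) 1)
    (hindep : ProbabilityTheory.iIndepFun v μ)
    (hident : ∀ k, ProbabilityTheory.IdentDistrib (v k) (v 0) μ μ)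
    (hint : Integrable (fun ω => 1 / v 0 ω) μ)
    (n : ℕ) (hn : 1 ≤ n) :
    ∫ ω, (|1 / backA (fun j => v j ω) (fun j => u j ω) n (n - 0)| +
      ∑ i ∈ Finset.Icc 1 n,
        |1 / backA (fun j => v j ω) (fun j => u j ω) n (n - i)
          - 1 / backA (fun j => v j ω) (fun j => u j ω) n (n - (i - 1))|) ∂μ
      ≤ 2 * ∫ ω, 1 / v 0 ω ∂μ :=
  bce_integrability_bound_general μ v u hvpos hu hident hint n
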